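/- Let f = sec(2x), g = 2 tan(2x), D = d/dx. For all n ≥ 1, D^n(g) = 2^{n+1} Σ_{k=0}^{⌊(n−1)/2⌋} a(n,k) f^{2k+2} g^{n−1−2k}, where a(n,k) satisfy a(1,0)=1, a(1,k)=0 for k≥1, and a(n,k) = (k+1)a(n−1,k) + (2n−4k)a(n−1,k−1). -/

import Mathlib

/-!
Only the relations `f' = f g` and `g' = 4 f²` matter. They give
`(f ^ p g ^ m)' = p f ^ p g ^ (m + 1) + 4 m f ^ (p + 2) g ^ (m - 1)`, so differentiating
`Σ_k a(n,k) f ^ (2k+2) g ^ (n-1-2k)` and collecting the coefficient of `f ^ (2k+2) g ^ (n-2k)`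
produces exactly twice the recurrence defining `a(n+1,k)`.
-/

open Finset

/-- Summed over `k ≤ n` rather than `k ≤ ⌊(n-1)/2⌋`: the extra coefficients vanish, and on them
the truncated exponent `n - 1 - 2k` is `0`. -/
noncomputable def gammaSum (a : ℕ → ℤ → ℝ) (n : ℕ) (u v : ℝ) : ℝ :=
  ∑ k ∈ range (n + 1), a n k * u ^ (2 * k + 2) * v ^ (n - 1 - 2 * k)

section Coefficients

variable {a : ℕ → ℤ → ℝ}

theorem gamma_eq_zero_of_lt_zero_or_le (ha1' : ∀ k : ℤ, k ≠ 0 → a 1 k = 0)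
    (harec : ∀ n : ℕ, 2 ≤ n → ∀ k : ℤ,
      a n k = (k + 1) * a (n - 1) k + (2 * n - 4 * k) * a (n - 1) (k - 1))
    {n : ℕ} (hn : 1 ≤ n) : ∀ k : ℤ, k < 0 ∨ (n : ℤ) ≤ 2 * k → a n k = 0 := by
  induction n, hn using Nat.le_induction with
  | base => exact fun k hk => ha1' k (by omega)
  | succ n hn ih =>
    intro k hk
    rw [harec (n + 1) (by omega) k, Nat.add_sub_cancel]
    rcases hk with hk | hk
    · rw [ih k (.inl hk), ih (k - 1) (.inl (by omega))]
      ring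
    · rw [ih k (.inr (by omega))]
      by_cases hedge : 2 * k = (n : ℤ) + 1
      · -- the coefficient `2(n+1) - 4k` vanishes on the edge of the triangle
        have hedge' : (2 : ℝ) * k = n + 1 := by exact_mod_cast hedge
        push_cast
        linear_combination (-2 * a n (k - 1)) * hedge'
      · rw [ih (k - 1) (.inr (by omega))]
        ring

theorem gammaSum_eq_sum_range_half {n : ℕ}
    (hvan : ∀ k : ℤ, k < 0 ∨ (n : ℤ) ≤ 2 * k → a n k = 0) (u v : ℝ) :
    gammaSum a n u v =
      ∑ k ∈ range ((n - 1) / 2 + 1), a n k * u ^ (2 * k + 2) * v ^ (n - 1 - 2 * k) := by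
  refine (sum_subset (fun k hk => ?_) fun k hk hk' => ?_).symm
  · simp only [mem_range] at hk ⊢
    omega
  · simp only [mem_range] at hk hk'
    rw [hvan k (.inr (by omega)), zero_mul, zero_mul]

theorem sum_deriv_terms_eq_two_mul_gammaSum {n : ℕ}
    (harec : ∀ k : ℤ, a (n + 1) k = (k + 1) * a n k + (2 * (n + 1 : ℕ) - 4 * k) * a n (k - 1))
    (hvan : ∀ k : ℤ, k < 0 ∨ (n : ℤ) ≤ 2 * k → a n k = 0) (u v : ℝ) :
    ∑ k ∈ range (n + 1), a n k *
        (((2 * k + 2 : ℕ) : ℝ) * u ^ (2 * k + 2) * v ^ (n - 1 - 2 * k + 1) +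
          4 * ((n - 1 - 2 * k : ℕ) : ℝ) * u ^ (2 * k + 2 + 2) * v ^ (n - 1 - 2 * k - 1)) =
      2 * gammaSum a (n + 1) u v := by
  set T : ℕ → ℝ := fun j => u ^ (2 * j + 2) * v ^ (n - 2 * j)
  set A : ℕ → ℝ := fun j => 2 * (j + 1) * a n j * T j
  set B : ℕ → ℝ := fun j => 2 * (2 * (n + 1) - 4 * j) * a n ((j : ℤ) - 1) * T j
  -- the derivative of the `k`-th monomial splits between the monomials of index `k` and `k + 1`
  have hterm : ∀ k : ℕ, a n k *
      (((2 * k + 2 : ℕ) : ℝ) * u ^ (2 * k + 2) * v ^ (n - 1 - 2 * k + 1) +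
        4 * ((n - 1 - 2 * k : ℕ) : ℝ) * u ^ (2 * k + 2 + 2) * v ^ (n - 1 - 2 * k - 1)) =
      A k + B (k + 1) := by
    intro k
    simp only [A, B, T]
    push_cast
    rw [add_sub_cancel_right]
    rcases le_or_gt n (2 * k) with hk | hk
    · rw [hvan k (.inr (by omega))]
      ring
    · obtain ⟨m, rfl⟩ : ∃ m, n = 2 * k + 1 + m := ⟨n - (2 * k + 1), by omega⟩
      rw [show 2 * k + 1 + m - 1 - 2 * k = m by omega, show 2 * k + 1 + m - 2 * k = m + 1 by omega,
        show 2 * k + 1 + m - 2 * (k + 1) = m - 1 by omega]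
      push_cast
      ring
  have hA : A (n + 1) = 0 := by
    simp only [A, hvan (n + 1 : ℕ) (.inr (by omega)), mul_zero, zero_mul]
  have hB : B 0 = 0 := by
    simp only [B, Nat.cast_zero, zero_sub, hvan (-1) (.inl (by norm_num)), mul_zero, zero_mul]
  calc _ = ∑ k ∈ range (n + 1), (A k + B (k + 1)) := sum_congr rfl fun k _ => hterm k
    _ = ∑ j ∈ range (n + 2), (A j + B j) := by
      rw [sum_add_distrib, sum_add_distrib, sum_range_succ A (n + 1), sum_range_succ' B, hA, hB]
      ring
    _ = 2 * gammaSum a (n + 1) u v := by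
      rw [gammaSum, mul_sum]
      refine sum_congr rfl fun j _ => ?_
      simp only [A, B, T, harec j, Nat.add_sub_cancel]
      push_cast
      ring

end Coefficients

section SecTanSystem

variable {f g : ℝ → ℝ} {x : ℝ}

theorem hasDerivAt_pow_mul_pow (hf : HasDerivAt f (f x * g x) x)
    (hg : HasDerivAt g (4 * f x ^ 2) x) (p m : ℕ) :
    HasDerivAt (fun y => f y ^ p * g y ^ m)
      (p * f x ^ p * g x ^ (m + 1) + 4 * m * f x ^ (p + 2) * g x ^ (m - 1)) x := by
  refine ((hf.pow p).mul (hg.pow m)).congr_deriv ?_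
  cases p with
  | zero =>
    simp only [Pi.pow_apply, pow_zero, Nat.cast_zero]
    ring
  | succ p =>
    simp only [Pi.pow_apply, Nat.add_sub_cancel]
    ring

theorem hasDerivAt_gammaSum {a : ℕ → ℤ → ℝ} {n : ℕ} (hf : HasDerivAt f (f x * g x) x)
    (hg : HasDerivAt g (4 * f x ^ 2) x)
    (harec : ∀ k : ℤ, a (n + 1) k = (k + 1) * a n k + (2 * (n + 1 : ℕ) - 4 * k) * a n (k - 1))
    (hvan : ∀ k : ℤ, k < 0 ∨ (n : ℤ) ≤ 2 * k → a n k = 0) :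
    HasDerivAt (fun y => gammaSum a n (f y) (g y)) (2 * gammaSum a (n + 1) (f x) (g x)) x := by
  have hsum := HasDerivAt.fun_sum (u := range (n + 1)) fun k _ =>
    (hasDerivAt_pow_mul_pow hf hg (2 * k + 2) (n - 1 - 2 * k)).const_mul (a n k)
  have hfun : (fun y => gammaSum a n (f y) (g y)) =
      fun y => ∑ k ∈ range (n + 1), a n k * (f y ^ (2 * k + 2) * g y ^ (n - 1 - 2 * k)) := by
    funext y
    simp only [gammaSum, mul_assoc]
  rw [← sum_deriv_terms_eq_two_mul_gammaSum harec hvan, hfun]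
  exact hsum

theorem iterate_deriv_eq_gammaSum {U : Set ℝ} (hU : IsOpen U)
    (hf : ∀ y ∈ U, HasDerivAt f (f y * g y) y) (hg : ∀ y ∈ U, HasDerivAt g (4 * f y ^ 2) y)
    {a : ℕ → ℤ → ℝ} (ha1 : a 1 0 = 1) (ha1' : ∀ k : ℤ, k ≠ 0 → a 1 k = 0)
    (harec : ∀ n : ℕ, 2 ≤ n → ∀ k : ℤ,
      a n k = (k + 1) * a (n - 1) k + (2 * n - 4 * k) * a (n - 1) (k - 1))
    {n : ℕ} (hn : 1 ≤ n) (hx : x ∈ U) :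
    deriv^[n] g x = 2 ^ (n + 1) * gammaSum a n (f x) (g x) := by
  induction n, hn using Nat.le_induction generalizing x with
  | base =>
    rw [Function.iterate_one, (hg x hx).deriv]
    norm_num [gammaSum, sum_range_succ, ha1, ha1' 1 one_ne_zero]
  | succ n hn ih =>
    have hev : deriv^[n] g =ᶠ[nhds x] fun y => 2 ^ (n + 1) * gammaSum a n (f y) (g y) := by
      filter_upwards [hU.mem_nhds hx] with y hy using ih hy
    have hrec : ∀ k : ℤ,
        a (n + 1) k = (k + 1) * a n k + (2 * (n + 1 : ℕ) - 4 * k) * a n (k - 1) := by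
      simpa using harec (n + 1) (by omega)
    rw [Function.iterate_succ_apply', hev.deriv_eq,
      (((hasDerivAt_gammaSum (hf x hx) (hg x hx) hrec
        (gamma_eq_zero_of_lt_zero_or_le ha1' harec hn))).const_mul _).deriv]
    ring

end SecTanSystem

theorem hasDerivAt_two_mul_tan_two_mul {x : ℝ} (hx : Real.cos (2 * x) ≠ 0) :
    HasDerivAt (fun y => 2 * Real.tan (2 * y)) (4 * (Real.cos (2 * x))⁻¹ ^ 2) x := by
  have h := ((Real.hasDerivAt_tan hx).comp x ((hasDerivAt_id x).const_mul 2)).const_mul 2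
  refine h.congr_deriv ?_
  field_simp
  ring

theorem hasDerivAt_inv_cos_two_mul {x : ℝ} (hx : Real.cos (2 * x) ≠ 0) :
    HasDerivAt (fun y => (Real.cos (2 * y))⁻¹)
      ((Real.cos (2 * x))⁻¹ * (2 * Real.tan (2 * x))) x := by
  have h := ((Real.hasDerivAt_cos (2 * x)).comp x ((hasDerivAt_id x).const_mul 2)).inv hx
  refine h.congr_deriv ?_
  simp only [Function.comp_apply, Real.tan_eq_sin_div_cos]
  field_simp

/-- With `f = sec(2x)`, `g = 2 tan(2x)` and `D = d/dx`: for all `n ≥ 1` and all `x`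
where `cos(2x) ≠ 0`, `D^n(g) = 2^{n+1} Σ_{k=0}^{⌊(n−1)/2⌋} a(n,k) f^{2k+2} g^{n−1−2k}`,
where `a(1,0)=1`, `a(1,k)=0` for `k ≥ 1` (and for `k < 0`), and
`a(n,k) = (k+1)a(n−1,k) + (2n−4k)a(n−1,k−1)` for `n ≥ 2`. -/
theorem iterated_deriv_tan_gamma (a : ℕ → ℤ → ℝ)
    (ha1 : a 1 0 = 1) (ha1' : ∀ k : ℤ, k ≠ 0 → a 1 k = 0)
    (harec : ∀ n : ℕ, 2 ≤ n → ∀ k : ℤ,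
      a n k = (k + 1) * a (n - 1) k + (2 * n - 4 * k) * a (n - 1) (k - 1)) :
    ∀ n : ℕ, 1 ≤ n → ∀ x : ℝ, Real.cos (2 * x) ≠ 0 →
      deriv^[n] (fun x : ℝ => 2 * Real.tan (2 * x)) x =
        2 ^ (n + 1) * ∑ k ∈ Finset.range ((n - 1) / 2 + 1),
          a n k * ((Real.cos (2 * x))⁻¹) ^ (2 * k + 2) *
            (2 * Real.tan (2 * x)) ^ (n - 1 - 2 * k) := by
  intro n hn x hx
  have hU : IsOpen {y : ℝ | Real.cos (2 * y) ≠ 0} :=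
    isOpen_ne.preimage (by fun_prop)
  rw [iterate_deriv_eq_gammaSum hU (fun y hy => hasDerivAt_inv_cos_two_mul hy)
    (fun y hy => hasDerivAt_two_mul_tan_two_mul hy) ha1 ha1' harec hn hx,
    gammaSum_eq_sum_range_half (gamma_eq_zero_of_lt_zero_or_le ha1' harec hn)]
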